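/- arXiv:1903.02372 — 4 statements merged into one kernel-verified Lean document; each statement's English description precedes it below -/
import Mathlib

section
/- Any group containing a non-abelian free subgroup (a subgroup isomorphic to the free group on two generators) is not amenable. -/
/-- A complex-valued function on `G` is bounded. -/
def IsBddFun {G : Type*} (f : G → ℂ) : Prop :=
  ∃ C : ℝ, ∀ x, ‖f x‖ ≤ C

/-- A (discrete) group `G` is amenable if there is a left-invariant mean on the space of
bounded complex-valued functions on `G`: a positive linear functional `m` with `m 1 = 1`
and `m (g · f) = m f`, where `(g · f) h = f (g * h)`. -/
def IsAmenableGroup (G : Type*) [Group G] : Prop :=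
  ∃ m : (G → ℂ) → ℂ,
    (∀ f₁ f₂, IsBddFun f₁ → IsBddFun f₂ → m (f₁ + f₂) = m f₁ + m f₂) ∧
    (∀ (c : ℂ) (f), IsBddFun f → m (c • f) = c * m f) ∧
    (∀ f, IsBddFun f → (∀ x, 0 ≤ (f x).re ∧ (f x).im = 0) →
      0 ≤ (m f).re ∧ (m f).im = 0) ∧
    m (fun _ => 1) = 1 ∧
    (∀ (g : G) (f), IsBddFun f → m (fun h => f (g * h)) = m f)

namespace NotAmenableAux

lemma bdd_add {G : Type*} {f₁ f₂ : G → ℂ} (h₁ : IsBddFun f₁) (h₂ : IsBddFun f₂) :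
    IsBddFun (f₁ + f₂) := by
  obtain ⟨C₁, hC₁⟩ := h₁
  obtain ⟨C₂, hC₂⟩ := h₂
  exact ⟨C₁ + C₂, fun x => le_trans (norm_add_le _ _) (add_le_add (hC₁ x) (hC₂ x))⟩

lemma bdd_comp {G H : Type*} {f : H → ℂ} (h : IsBddFun f) (φ : G → H) :
    IsBddFun (f ∘ φ) := by
  obtain ⟨C, hC⟩ := h
  exact ⟨C, fun x => hC (φ x)⟩

/-- Amenability passes to subgroups. -/
lemma subgroup_amenable {G : Type*} [Group G] (H : Subgroup G) (hG : IsAmenableGroup G) :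
    IsAmenableGroup H := by
  obtain ⟨m, madd, msmul, mpos, mone, minv⟩ := hG
  -- right coset representative
  let rep : G → G := fun g => (Quotient.mk (QuotientGroup.rightRel H) g).out
  have hrep : ∀ g : G, g * (rep g)⁻¹ ∈ H := by
    intro g
    exact (QuotientGroup.rightRel_apply).mp
      (Quotient.exact (Quotient.out_eq (Quotient.mk (QuotientGroup.rightRel H) g)))
  have hrep_mul : ∀ (h : H) (g : G), rep ((h : G) * g) = rep g := by
    intro h g
    have : Quotient.mk (QuotientGroup.rightRel H) ((h : G) * g)
        = Quotient.mk (QuotientGroup.rightRel H) g := by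
      apply Quotient.sound
      refine (QuotientGroup.rightRel_apply).mpr ?_
      have : g * ((h : G) * g)⁻¹ = (h : G)⁻¹ := by group
      rw [this]
      exact H.inv_mem h.2
    simp only [rep, this]
  let φ : G → H := fun g => ⟨g * (rep g)⁻¹, hrep g⟩
  have hφ : ∀ (h : H) (g : G), φ ((h : G) * g) = h * φ g := by
    intro h g
    apply Subtype.ext
    simp only [φ, hrep_mul h g, Subgroup.coe_mul, mul_assoc]
  refine ⟨fun f => m (f ∘ φ), ?_, ?_, ?_, ?_, ?_⟩
  · intro f₁ f₂ h₁ h₂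
    have := madd (f₁ ∘ φ) (f₂ ∘ φ) (bdd_comp h₁ φ) (bdd_comp h₂ φ)
    exact this
  · intro c f hf
    have := msmul c (f ∘ φ) (bdd_comp hf φ)
    exact this
  · intro f hf hpos
    exact mpos (f ∘ φ) (bdd_comp hf φ) (fun x => hpos (φ x))
  · exact mone
  · intro h f hf
    have key : (fun g : G => f (h * φ g)) = (fun g : G => (f ∘ φ) ((h : G) * g)) := by
      funext g
      simp [Function.comp, hφ h g]
    show m ((fun k => f (h * k)) ∘ φ) = m (f ∘ φ)
    have e2 : ((fun k => f (h * k)) ∘ φ) = fun g : G => (f ∘ φ) ((h : G) * g) := by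
      funext g; simp [Function.comp, hφ h g]
    rw [e2]
    exact minv (h : G) (f ∘ φ) (bdd_comp hf φ)

/-- Amenability transports along group isomorphisms. -/
lemma iso_amenable {G H : Type*} [Group G] [Group H] (e : G ≃* H) (hH : IsAmenableGroup H) :
    IsAmenableGroup G := by
  obtain ⟨m, madd, msmul, mpos, mone, minv⟩ := hH
  refine ⟨fun f => m (f ∘ e.symm), ?_, ?_, ?_, ?_, ?_⟩
  · intro f₁ f₂ h₁ h₂
    exact madd (f₁ ∘ e.symm) (f₂ ∘ e.symm) (bdd_comp h₁ _) (bdd_comp h₂ _)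
  · intro c f hf
    exact msmul c (f ∘ e.symm) (bdd_comp hf _)
  · intro f hf hpos
    exact mpos _ (bdd_comp hf _) (fun x => hpos _)
  · exact mone
  · intro g f hf
    have key : ((fun k => f (g * k)) ∘ e.symm) = fun h : H => (f ∘ e.symm) (e g * h) := by
      funext h
      simp [Function.comp]
    show m ((fun k => f (g * k)) ∘ e.symm) = m (f ∘ e.symm)
    rw [key]
    exact minv (e g) (f ∘ e.symm) (bdd_comp hf _)

/-- The head of the reduced word. -/
def hd (w : FreeGroup Bool) : Option (Bool × Bool) := w.toWord.head?

/-- Indicator of the set of reduced words with head `v`. -/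
def χ (v : Option (Bool × Bool)) (w : FreeGroup Bool) : ℂ := if hd w = v then 1 else 0

lemma χ_bdd (v : Option (Bool × Bool)) : IsBddFun (χ v) := by
  refine ⟨1, fun x => ?_⟩
  unfold χ
  split <;> simp

lemma χ_pos (v : Option (Bool × Bool)) : ∀ x, 0 ≤ ((χ v) x).re ∧ ((χ v) x).im = 0 := by
  intro x
  unfold χ
  split <;> simp

/-- Key combinatorial fact: if `w` does not start with `x`, then `x⁻¹ * w` starts with
`x⁻¹`. -/
lemma key (x : Bool) (w : FreeGroup Bool) (h : hd w ≠ some (x, true)) :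
    hd ((FreeGroup.of x)⁻¹ * w) = some (x, false) := by
  have hw : w = FreeGroup.mk w.toWord := (FreeGroup.mk_toWord).symm
  have h1 : (FreeGroup.of x)⁻¹ * w = FreeGroup.mk ((x, false) :: w.toWord) := by
    conv_lhs => rw [hw]
    rw [show (FreeGroup.of x)⁻¹ = FreeGroup.mk [(x, false)] from rfl, FreeGroup.mul_mk]
    rfl
  unfold hd
  rw [h1, FreeGroup.toWord_mk, FreeGroup.reduce.cons, FreeGroup.reduce_toWord]
  cases hw' : w.toWord with
  | nil => simp
  | cons y t =>
    have hy : y ≠ (x, true) := by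
      intro hc
      apply h
      simp [hd, hw', hc]
    have : ¬((x, false).1 = y.1 ∧ (x, false).2 = !y.2) := by
      rintro ⟨h1', h2'⟩
      apply hy
      cases y with
      | mk y1 y2 =>
        simp at h1' h2'
        subst h1'
        cases y2 with
        | false => simp at h2'
        | true => rfl
    simp only [this, if_false]
    rfl

/-- The free group on two generators is not amenable. -/
lemma free_not_amenable : ¬ IsAmenableGroup (FreeGroup Bool) := by
  rintro ⟨m, madd, msmul, mpos, mone, minv⟩
  -- monotonicity-style helper: if f = g + d with d nonneg real, re (m f) ≥ re (m g)
  -- the four indicator functions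
  set fAp := χ (some (true, true)) with hfAp
  set fAm := χ (some (true, false)) with hfAm
  set fBp := χ (some (false, true)) with hfBp
  set fBm := χ (some (false, false)) with hfBm
  -- lower bound: re (m fAp) + re (m fAm) ≥ 1, and similarly for B
  have lower : ∀ x : Bool, 1 ≤ (m (χ (some (x, true)))).re + (m (χ (some (x, false)))).re := by
    intro x
    set f := χ (some (x, true)) with hf
    set f' : FreeGroup Bool → ℂ := fun w => χ (some (x, false)) ((FreeGroup.of x)⁻¹ * w) with hf'
    have hf'bdd : IsBddFun f' := bdd_comp (χ_bdd _) _
    have hminv : m f' = m (χ (some (x, false))) :=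
      minv ((FreeGroup.of x)⁻¹) (χ (some (x, false))) (χ_bdd _)
    -- d := f + f' - 1 is nonneg real
    set d : FreeGroup Bool → ℂ := fun w => f w + f' w - 1 with hd'
    have hsum : ∀ w, f w + f' w = 1 ∨ f w + f' w = 2 := by
      intro w
      by_cases h1 : hd w = some (x, true)
      · have hfw : f w = 1 := by simp [hf, χ, h1]
        by_cases h2 : hd ((FreeGroup.of x)⁻¹ * w) = some (x, false)
        · right; simp [hf', χ, h2, hfw]; norm_num
        · left; simp [hf', χ, h2, hfw]
      · have hfw : f w = 0 := by simp [hf, χ, h1]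
        have h2 := key x w h1
        left; simp [hf', χ, h2, hfw]
    have hdbdd : IsBddFun d := by
      refine ⟨1, fun w => ?_⟩
      rcases hsum w with h | h <;> simp [hd', h] <;> try norm_num
    have hdpos : ∀ w, 0 ≤ (d w).re ∧ (d w).im = 0 := by
      intro w
      rcases hsum w with h | h <;> simp [hd', h] <;> try norm_num
    have hsplit : f + f' = (fun _ => (1 : ℂ)) + d := by
      funext w
      simp only [Pi.add_apply, hd']
      ring
    have hmsum : m (f + f') = m f + m f' := madd f f' (χ_bdd _) hf'bdd
    have hmsplit : m ((fun _ => (1 : ℂ)) + d) = m (fun _ => 1) + m d :=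
      madd _ d ⟨1, fun x => by simp⟩ hdbdd
    have : m f + m f' = 1 + m d := by
      rw [← hmsum, hsplit, hmsplit, mone]
    have hdre := (mpos d hdbdd hdpos).1
    have hre : (m f).re + (m f').re = 1 + (m d).re := by
      have := congrArg Complex.re this
      simpa using this
    rw [← hminv]
    linarith
  -- upper bound: sum of four re's ≤ 1
  have disj : ∀ w, (fAp w + fAm w + fBp w + fBm w = 0) ∨ (fAp w + fAm w + fBp w + fBm w = 1) := by
    intro w
    rcases h : hd w with _ | ⟨x, c⟩
    · left; simp [hfAp, hfAm, hfBp, hfBm, χ, h]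
    · right
      cases x <;> cases c <;> simp [hfAp, hfAm, hfBp, hfBm, χ, h]
  set s : FreeGroup Bool → ℂ := fun w => fAp w + fAm w + fBp w + fBm w with hs
  set u : FreeGroup Bool → ℂ := fun w => 1 - s w with hu
  have hsbdd : IsBddFun s := by
    refine ⟨1, fun w => ?_⟩
    rcases disj w with h | h <;> simp [hs, h] <;> try norm_num
  have hubdd : IsBddFun u := by
    refine ⟨1, fun w => ?_⟩
    rcases disj w with h | h <;> simp [hu, hs, h] <;> try norm_num
  have hupos : ∀ w, 0 ≤ (u w).re ∧ (u w).im = 0 := by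
    intro w
    rcases disj w with h | h <;> simp [hu, hs, h] <;> try norm_num
  have hsu : s + u = fun _ => (1 : ℂ) := by
    funext w
    simp [hu]
  have h1 : m s + m u = 1 := by
    rw [← madd s u hsbdd hubdd, hsu, mone]
  have hure := (mpos u hubdd hupos).1
  -- m s = m fAp + m fAm + m fBp + m fBm
  have hms : m s = m fAp + m fAm + m fBp + m fBm := by
    have e1 : s = ((fAp + fAm) + (fBp + fBm)) := by
      funext w; simp [hs]; ring
    rw [e1, madd _ _ (bdd_add (χ_bdd _) (χ_bdd _)) (bdd_add (χ_bdd _) (χ_bdd _)),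
      madd _ _ (χ_bdd _) (χ_bdd _), madd _ _ (χ_bdd _) (χ_bdd _)]
    ring
  have hA := lower true
  have hB := lower false
  have hsre : (m s).re = (m fAp).re + (m fAm).re + (m fBp).re + (m fBm).re := by
    rw [hms]; simp
  have h1re : (m s).re + (m u).re = 1 := by
    have := congrArg Complex.re h1
    simpa using this
  rw [hfAp, hfAm, hfBp, hfBm] at hsre
  linarith

end NotAmenableAux

/-- Any group containing a subgroup isomorphic to the free group on two generators is
not amenable. -/
theorem not_amenable_of_free_subgroup {G : Type*} [Group G]
    (H : Subgroup G) (h : Nonempty (FreeGroup Bool ≃* H)) :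
    ¬ IsAmenableGroup G := by
  intro hG
  obtain ⟨e⟩ := h
  exact NotAmenableAux.free_not_amenable
    (NotAmenableAux.iso_amenable e (NotAmenableAux.subgroup_amenable H hG))
end

section
/- Every dendron is locally connected. -/
/-- `z` separates `x` from `y` in `X`: the complement of `z` is the union of two disjoint
open sets containing `x` and `y` respectively. -/
def SeparatesPts {X : Type*} [TopologicalSpace X] (z x y : X) : Prop :=
  ∃ U V : Set X, IsOpen U ∧ IsOpen V ∧ Disjoint U V ∧
    x ∈ U ∧ y ∈ V ∧ U ∪ V = {z}ᶜ

/-- Auxiliary: if `z ∈ O₁` and the trace of the half-space on `O₂` is nonempty, the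
intersection goal is nonempty. -/
lemma halfspace_aux {X : Type*} [TopologicalSpace X] {U V : Set X} {z : X}
    (hU : IsOpen U) (hV : IsOpen V) (hd : Disjoint U V) (huv : U ∪ V = {z}ᶜ)
    {K : Set X} (hK : IsPreconnected K) (hz : z ∈ K)
    {O₁ O₂ : Set X} (h1 : IsOpen O₁) (h2 : IsOpen O₂)
    (hsub : K ∩ (U ∪ {z}) ⊆ O₁ ∪ O₂)
    (hz1 : z ∈ O₁) (hb : ((K ∩ (U ∪ {z})) ∩ O₂).Nonempty) :
    ((K ∩ (U ∪ {z})) ∩ (O₁ ∩ O₂)).Nonempty := by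
  obtain ⟨b, ⟨hbK, hbU⟩, hbO2⟩ := hb
  rcases hbU with hbU | hbz
  · -- b ∈ U
    have hKsub : K ⊆ (O₁ ∪ V) ∪ (U ∩ O₂) := by
      intro k hk
      by_cases hkz : k = z
      · exact Or.inl (Or.inl (hkz ▸ hz1))
      · have : k ∈ U ∪ V := huv ▸ hkz
        rcases this with hkU | hkV
        · rcases hsub ⟨hk, Or.inl hkU⟩ with h | h
          · exact Or.inl (Or.inl h)
          · exact Or.inr ⟨hkU, h⟩
        · exact Or.inl (Or.inr hkV)
    obtain ⟨k, hkK, hk1, hkU, hkO2⟩ :=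
      hK (O₁ ∪ V) (U ∩ O₂) (h1.union hV) (hU.inter h2) hKsub
        ⟨z, hz, Or.inl hz1⟩ ⟨b, hbK, hbU, hbO2⟩
    have hkO1 : k ∈ O₁ := by
      rcases hk1 with h | h
      · exact h
      · exact absurd h (Set.disjoint_left.mp hd hkU)
    exact ⟨k, ⟨hkK, Or.inl hkU⟩, hkO1, hkO2⟩
  · -- b = z, so z ∈ O₂ as well
    have hbz' : b = z := hbz
    exact ⟨z, ⟨hz, Or.inr rfl⟩, hz1, hbz' ▸ hbO2⟩

/-- Key lemma: the intersection of a preconnected set with a "half-space with its boundary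
point" `U ∪ {z}` is preconnected. -/
lemma halfspace_inter_preconnected {X : Type*} [TopologicalSpace X] {U V : Set X} {z : X}
    (hU : IsOpen U) (hV : IsOpen V) (hd : Disjoint U V) (huv : U ∪ V = {z}ᶜ)
    {K : Set X} (hK : IsPreconnected K) :
    IsPreconnected (K ∩ (U ∪ {z})) := by
  by_cases hz : z ∈ K
  · intro O₁ O₂ h1 h2 hsub ha hb
    have hzS : z ∈ K ∩ (U ∪ {z}) := ⟨hz, Or.inr rfl⟩
    rcases hsub hzS with hz1 | hz2
    · exact halfspace_aux hU hV hd huv hK hz h1 h2 hsub hz1 hb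
    · have := halfspace_aux hU hV hd huv hK hz h2 h1 (fun p hp => Or.symm (hsub hp)) hz2 ha
      rwa [Set.inter_comm O₂ O₁] at this
  · have hKsub : K ⊆ U ∪ V := by
      rw [huv]; intro k hk hkz
      exact hz (Set.mem_singleton_iff.mp hkz ▸ hk)
    rcases hK.subset_or_subset hU hV hd hKsub with h | h
    · have : K ∩ (U ∪ {z}) = K := by
        apply Set.inter_eq_left.mpr
        exact fun k hk => Or.inl (h hk)
      rwa [this]
    · have : K ∩ (U ∪ {z}) = ∅ := by
        ext k
        simp only [Set.mem_inter_iff, Set.mem_union, Set.mem_singleton_iff,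
          Set.mem_empty_iff_false, iff_false, not_and, not_or]
        intro hk
        constructor
        · exact fun hkU => Set.disjoint_left.mp hd hkU (h hk)
        · rintro rfl; exact hz hk
      rw [this]; exact isPreconnected_empty

/-- Every dendron (compact connected Hausdorff space in which any two distinct points are
separated by a third point) is locally connected. -/
theorem dendron_locallyConnected
    {X : Type*} [TopologicalSpace X] [CompactSpace X] [ConnectedSpace X] [T2Space X]
    (hden : ∀ x y : X, x ≠ y → ∃ z : X, SeparatesPts z x y) :
    LocallyConnectedSpace X := by
  rw [locallyConnectedSpace_iff_connected_subsets]
  intro x W hW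
  obtain ⟨W', hW'sub, hW'open, hxW'⟩ := mem_nhds_iff.mp hW
  have hsep : ∀ y ∈ W'ᶜ, ∃ z U V, IsOpen U ∧ IsOpen V ∧ Disjoint U V ∧
      x ∈ U ∧ y ∈ V ∧ U ∪ V = {z}ᶜ := by
    intro y hy
    have hxy : x ≠ y := fun h => hy (h ▸ hxW')
    obtain ⟨z, U, V, h⟩ := hden x y hxy
    exact ⟨z, U, V, h⟩
  choose! z U V hUo hVo hdisj hxU hyV huv using hsep
  have hcpt : IsCompact W'ᶜ := hW'open.isClosed_compl.isCompact
  obtain ⟨t, hts, htfin, htcov⟩ := hcpt.elim_finite_subcover_image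
    (fun y hy => hVo y hy) (fun y hy => Set.mem_biUnion hy (hyV y hy))
  -- the finite intersection of half-spaces
  set Kset := ⋂ y ∈ t, (U y ∪ {z y}) with hKset
  have hKpre : IsPreconnected Kset := by
    rw [hKset]
    refine Set.Finite.induction_on_subset (motive := fun s _ => IsPreconnected (⋂ y ∈ s, (U y ∪ {z y}))) t htfin ?_ ?_
    · simpa using isPreconnected_univ
    · intro a s haT _ _ ih
      rw [Set.biInter_insert, Set.inter_comm]
      have haW : a ∈ W'ᶜ := hts haT
      exact halfspace_inter_preconnected (hUo a haW) (hVo a haW) (hdisj a haW)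
        (huv a haW) ih
  refine ⟨Kset, ?_, hKpre, ?_⟩
  · -- Kset is a neighborhood of x
    apply mem_nhds_iff.mpr
    refine ⟨⋂ y ∈ t, U y, ?_, ?_, ?_⟩
    · exact fun w hw => Set.mem_biInter fun y hy => Or.inl (Set.mem_iInter₂.mp hw y hy)
    · exact htfin.isOpen_biInter (fun y hy => hUo y (hts hy))
    · exact Set.mem_biInter (fun y hy => hxU y (hts hy))
  · -- Kset ⊆ W
    intro w hw
    by_contra hwW
    have hwW' : w ∈ W'ᶜ := fun h => hwW (hW'sub h)
    obtain ⟨y, hyt, hwV⟩ := Set.mem_iUnion₂.mp (htcov hwW')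
    have hyW : y ∈ W'ᶜ := hts hyt
    have hwU : w ∈ U y ∪ {z y} := Set.mem_iInter₂.mp hw y hyt
    rcases hwU with h | h
    · exact Set.disjoint_left.mp (hdisj y hyW) h hwV
    · have : w ∈ U y ∪ V y := Or.inr hwV
      rw [huv y hyW] at this
      exact this h
end

section
/- Let G be a group acting by homeomorphisms on a compact Hausdorff space X and suppose that the set M = {x ∈ X : for all μ ∈ P(X), δ_x lies in the weak-* closure of the G-orbit of μ} is nonempty. Then M is the unique minimal subset of X for the action of G. -/
/-!
Every point `x` of `M` lies in the closure of every orbit: taking `μ = δ_y`, the orbit of `δ_y`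
consists of the Dirac masses along the orbit of `y`, and `x ↦ δ_x` is a topological embedding of
the compact Hausdorff (so completely regular) space `X` into `P(X)`. Hence `M` is contained in
every nonempty closed invariant set. Being itself closed and invariant (the pushforward maps are
continuous and map orbits into themselves), `M` is then the smallest such set, hence the unique
minimal set.
-/

open MeasureTheory Pointwise

/-- The pushforward action of `g : G` on Borel probability measures on `X`. -/
noncomputable def pushPM {G X : Type*} [Group G] [TopologicalSpace X]
    [MeasurableSpace X] [BorelSpace X] [MulAction G X] [ContinuousConstSMul G X]
    (g : G) (μ : ProbabilityMeasure X) : ProbabilityMeasure X :=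
  μ.map (f := fun x => g • x) (continuous_const_smul g).measurable.aemeasurable

/-- The Dirac probability measure at a point. -/
noncomputable def diracPM {X : Type*} [TopologicalSpace X] [MeasurableSpace X]
    (x : X) : ProbabilityMeasure X :=
  ⟨Measure.dirac x, inferInstance⟩

/-- A minimal set for the action: nonempty, closed, invariant, and containing no proper
nonempty closed invariant subset. -/
def IsMinimalSet (G : Type*) {X : Type*} [Group G] [TopologicalSpace X] [MulAction G X]
    (M : Set X) : Prop :=
  M.Nonempty ∧ IsClosed M ∧ (∀ g : G, g • M ⊆ M) ∧
    ∀ N : Set X, N ⊆ M → N.Nonempty → IsClosed N → (∀ g : G, g • N ⊆ N) → N = M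

section MinimalSet

variable {G X : Type*} [Group G] [TopologicalSpace X] [MulAction G X]

theorem closure_orbit_subset {N : Set X} (hN : IsClosed N) (hinv : ∀ g : G, g • N ⊆ N)
    {y : X} (hy : y ∈ N) : closure (MulAction.orbit G y) ⊆ N :=
  hN.closure_subset_iff.2 <| by
    rintro _ ⟨g, rfl⟩
    exact hinv g (Set.smul_mem_smul_set hy)

theorem isMinimalSet_and_unique_of_forall_subset {S : Set X} (hS : S.Nonempty)
    (hScl : IsClosed S) (hSinv : ∀ g : G, g • S ⊆ S)
    (hSsub : ∀ N : Set X, N.Nonempty → IsClosed N → (∀ g : G, g • N ⊆ N) → S ⊆ N) :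
    IsMinimalSet G S ∧ ∀ M : Set X, IsMinimalSet G M → M = S :=
  ⟨⟨hS, hScl, hSinv, fun N hNS hN hNcl hNinv => hNS.antisymm (hSsub N hN hNcl hNinv)⟩,
    fun _ ⟨hM, hMcl, hMinv, hMmin⟩ => (hMmin S (hSsub _ hM hMcl hMinv) hS hScl hSinv).symm⟩

end MinimalSet

section ProbabilityMeasure

variable {G X : Type*} [Group G] [TopologicalSpace X] [MeasurableSpace X] [BorelSpace X]
  [MulAction G X] [ContinuousConstSMul G X]

variable (G) in
def pushOrbit (μ : ProbabilityMeasure X) : Set (ProbabilityMeasure X) :=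
  {ν | ∃ g : G, ν = pushPM g μ}

variable (G X) in
def strongProximalitySet : Set X :=
  {x | ∀ μ : ProbabilityMeasure X, diracPM x ∈ closure (pushOrbit G μ)}

theorem continuous_diracPM : Continuous (diracPM : X → ProbabilityMeasure X) :=
  continuous_diracProba

theorem continuous_pushPM (g : G) : Continuous (pushPM (X := X) g) :=
  ProbabilityMeasure.continuous_map (continuous_const_smul g)

theorem pushPM_diracPM (g : G) (x : X) : pushPM g (diracPM x) = diracPM (g • x) :=
  Subtype.ext <| Measure.map_dirac' (continuous_const_smul g).measurable x

theorem pushPM_mul (g h : G) (μ : ProbabilityMeasure X) :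
    pushPM (g * h) μ = pushPM g (pushPM h μ) := by
  apply Subtype.ext
  change μ.toMeasure.map (fun x => (g * h) • x)
    = (μ.toMeasure.map (fun x => h • x)).map (fun x => g • x)
  rw [Measure.map_map (continuous_const_smul g).measurable (continuous_const_smul h).measurable]
  simp only [Function.comp_def, mul_smul]

theorem pushOrbit_diracPM (y : X) :
    pushOrbit G (diracPM y) = diracPM '' MulAction.orbit G y := by
  ext ν
  simp [pushOrbit, MulAction.orbit, pushPM_diracPM, eq_comm]

theorem image_pushPM_pushOrbit_subset (g : G) (μ : ProbabilityMeasure X) :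
    pushPM g '' pushOrbit G μ ⊆ pushOrbit G μ := by
  rintro _ ⟨_, ⟨h, rfl⟩, rfl⟩
  exact ⟨g * h, (pushPM_mul g h μ).symm⟩

theorem isClosed_strongProximalitySet : IsClosed (strongProximalitySet G X) := by
  simp only [strongProximalitySet, Set.ofPred_forall]
  exact isClosed_iInter fun μ => isClosed_closure.preimage continuous_diracPM

theorem smul_strongProximalitySet_subset (g : G) :
    g • strongProximalitySet G X ⊆ strongProximalitySet G X := by
  rintro _ ⟨x, hx, rfl⟩ μ
  rw [← pushPM_diracPM]
  exact closure_mono (image_pushPM_pushOrbit_subset g μ)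
    ((continuous_pushPM g).continuousOn.image_closure (Set.mem_image_of_mem _ (hx μ)))

theorem mem_closure_orbit_of_mem_strongProximalitySet [T0Space X] [CompletelyRegularSpace X]
    {x : X} (hx : x ∈ strongProximalitySet G X) (y : X) : x ∈ closure (MulAction.orbit G y) := by
  have hδ := hx (diracPM y)
  rw [pushOrbit_diracPM] at hδ
  rw [(isEmbedding_diracProba (X := X)).closure_eq_preimage_closure_image]
  exact hδ

theorem strongProximalitySet_subset [T0Space X] [CompletelyRegularSpace X] {N : Set X}
    (hN : N.Nonempty) (hNcl : IsClosed N) (hNinv : ∀ g : G, g • N ⊆ N) :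
    strongProximalitySet G X ⊆ N :=
  fun _ hx => closure_orbit_subset hNcl hNinv hN.some_mem
    (mem_closure_orbit_of_mem_strongProximalitySet hx _)

end ProbabilityMeasure

/-- If the set `M = {x | ∀ μ ∈ P(X), δ_x ∈ closure (Orb_G μ)}` is nonempty, then it is
the unique minimal subset of the action of `G` on the compact Hausdorff space `X`. -/
theorem unique_minimal_of_strong_proximality_set
    {G X : Type*} [Group G] [TopologicalSpace X] [CompactSpace X] [T2Space X]
    [MeasurableSpace X] [BorelSpace X] [MulAction G X] [ContinuousConstSMul G X]
    (hne : {x : X | ∀ μ : ProbabilityMeasure X,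
        diracPM x ∈ closure {ν | ∃ g : G, ν = pushPM g μ}}.Nonempty) :
    IsMinimalSet G {x : X | ∀ μ : ProbabilityMeasure X,
        diracPM x ∈ closure {ν | ∃ g : G, ν = pushPM g μ}} ∧
    ∀ M : Set X, IsMinimalSet G M →
      M = {x : X | ∀ μ : ProbabilityMeasure X,
        diracPM x ∈ closure {ν | ∃ g : G, ν = pushPM g μ}} :=
  isMinimalSet_and_unique_of_forall_subset (S := strongProximalitySet G X) hne
    isClosed_strongProximalitySet smul_strongProximalitySet_subset
    fun _ => strongProximalitySet_subset
end

section
/- Let G be a group acting by homeomorphisms on a compact metric space X, and suppose the set of recurrent points is nonempty. Then there exists a continuous (atomless) Borel probability measure on X which assigns measure 0 or 1 to every G-invariant Borel set. -/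
open MeasureTheory Pointwise

namespace GlimmEffrosAux

open Set Function Filter Topology
open scoped ENNReal


noncomputable section

instance : MeasurableSpace (ZMod 2) := ⊤
instance : BorelSpace (ZMod 2) := ⟨borel_eq_top_of_discrete.symm⟩
instance : IsTopologicalAddGroup (ZMod 2) :=
  { continuous_add := continuous_of_discreteTopology
    continuous_neg := continuous_of_discreteTopology }

abbrev Om : Type := ℕ → ZMod 2

/-- The coin-flipping (Haar) measure on `ℕ → ZMod 2`. -/
def μc : Measure Om := Measure.addHaarMeasure (⊤ : TopologicalSpace.PositiveCompacts Om)

instance : μc.IsAddLeftInvariant :=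
  Measure.isAddLeftInvariant_addHaarMeasure _

instance : IsProbabilityMeasure μc :=
  ⟨by
    have := Measure.addHaarMeasure_self (K₀ := (⊤ : TopologicalSpace.PositiveCompacts Om))
    rwa [TopologicalSpace.PositiveCompacts.coe_top] at this⟩

/-- Complete cylinder on the first `n` coordinates. -/
def cyl (n : ℕ) (c : Fin n → ZMod 2) : Set Om := {ω | ∀ i : Fin n, ω i = c i}

lemma measurableSet_cyl (n : ℕ) (c : Fin n → ZMod 2) : MeasurableSet (cyl n c) := by
  have : cyl n c = ⋂ i : Fin n, (fun ω : Om => ω i) ⁻¹' {c i} := by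
    ext ω; simp [cyl]
  rw [this]
  exact MeasurableSet.iInter fun i => (measurable_pi_apply _) (MeasurableSet.singleton _)

lemma mem_cyl_self (n : ℕ) (ω : Om) : ω ∈ cyl n fun i => ω i := fun _ => rfl

lemma cyl_disjoint {n : ℕ} {c c' : Fin n → ZMod 2} (h : c ≠ c') :
    Disjoint (cyl n c) (cyl n c') := by
  rw [Set.disjoint_left]
  intro ω hω hω'
  exact h (funext fun i => (hω i).symm.trans (hω' i))

def Cyl : Set (Set Om) := {S | ∃ n c, S = cyl n c}

lemma isPiSystem_Cyl : IsPiSystem Cyl := by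
  have key : ∀ (n m : ℕ) (c : Fin n → ZMod 2) (c' : Fin m → ZMod 2), n ≤ m →
      (cyl n c ∩ cyl m c').Nonempty → cyl n c ∩ cyl m c' = cyl m c' := by
    intro n m c c' hnm ⟨ω₀, hω₀⟩
    apply Set.inter_eq_self_of_subset_right
    intro ω hω i
    have h1 : ω i = ω₀ i := by
      have h2 := hω ⟨i, lt_of_lt_of_le i.2 hnm⟩
      have h3 := hω₀.2 ⟨i, lt_of_lt_of_le i.2 hnm⟩
      exact h2.trans h3.symm
    rw [h1]
    exact hω₀.1 i
  rintro S ⟨n, c, rfl⟩ T ⟨m, c', rfl⟩ hne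
  rcases le_total n m with h | h
  · exact ⟨m, c', key n m c c' h hne⟩
  · refine ⟨n, c, ?_⟩
    rw [Set.inter_comm] at hne ⊢
    exact key m n c' c h hne

lemma generateFrom_Cyl :
    (inferInstance : MeasurableSpace Om) = MeasurableSpace.generateFrom Cyl := by
  apply le_antisymm
  · -- pi ≤ generateFrom Cyl
    have hev : ∀ i : ℕ,
        @Measurable Om (ZMod 2) (MeasurableSpace.generateFrom Cyl) _ (fun ω : Om => ω i) := by
      intro i t _
      show MeasurableSet[MeasurableSpace.generateFrom Cyl] ((fun ω : Om => ω i) ⁻¹' t)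
      have : (fun ω : Om => ω i) ⁻¹' t =
          ⋃ c ∈ {c : Fin (i + 1) → ZMod 2 | c ⟨i, Nat.lt_succ_self i⟩ ∈ t}, cyl (i + 1) c := by
        ext ω
        simp only [Set.mem_preimage, Set.mem_iUnion, Set.mem_setOf_eq, exists_prop]
        constructor
        · intro hω
          exact ⟨fun j => ω j, hω, mem_cyl_self _ _⟩
        · rintro ⟨c, hc, hωc⟩
          have := hωc ⟨i, Nat.lt_succ_self i⟩
          simpa [this] using hc
      rw [this]
      exact MeasurableSet.biUnion (Set.to_countable _)
        fun c _ => MeasurableSpace.measurableSet_generateFrom ⟨_, _, rfl⟩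
    rw [show (inferInstance : MeasurableSpace Om) =
      ⨆ i : ℕ, MeasurableSpace.comap (fun ω : Om => ω i) inferInstance from rfl]
    refine iSup_le fun i => ?_
    rw [MeasurableSpace.le_def]
    rintro s ⟨t, ht, rfl⟩
    exact hev i ht
  · exact MeasurableSpace.generateFrom_le (by rintro S ⟨n, c, rfl⟩; exact measurableSet_cyl n c)

/-- translation carrying one complete cylinder to another -/
def dOf {n : ℕ} (c c' : Fin n → ZMod 2) : Om := fun i =>
  if h : i < n then c' ⟨i, h⟩ - c ⟨i, h⟩ else 0

lemma dOf_eventually_zero {n : ℕ} (c c' : Fin n → ZMod 2) :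
    ∀ k, n ≤ k → dOf c c' k = 0 := fun k hk => dif_neg (not_lt.2 hk)

lemma preimage_add_dOf {n : ℕ} (c c' : Fin n → ZMod 2) :
    (fun ω : Om => dOf c c' + ω) ⁻¹' cyl n c' = cyl n c := by
  ext ω
  simp only [Set.mem_preimage, cyl, Set.mem_setOf_eq, Pi.add_apply]
  constructor
  · intro h i
    have h1 := h i
    rw [dOf, dif_pos i.2] at h1
    simp only [Fin.eta] at h1
    linear_combination h1
  · intro h i
    rw [dOf, dif_pos i.2]
    simp only [Fin.eta, h i]
    exact sub_add_cancel _ _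

/-- A set invariant under finitely supported translations. -/
def FlipInvariant (E : Set Om) : Prop :=
  ∀ d : Om, (∃ m : ℕ, ∀ k, m ≤ k → d k = 0) → (fun ω : Om => d + ω) ⁻¹' E = E

lemma flipInvariant_univ : FlipInvariant Set.univ := fun _ _ => rfl

lemma measure_inter_cyl_eq {E : Set Om} (hinv : FlipInvariant E)
    {n : ℕ} (c c' : Fin n → ZMod 2) : μc (E ∩ cyl n c) = μc (E ∩ cyl n c') := by
  have h1 : (fun ω : Om => dOf c c' + ω) ⁻¹' (E ∩ cyl n c') = E ∩ cyl n c := by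
    rw [Set.preimage_inter, preimage_add_dOf c c',
      hinv (dOf c c') ⟨n, dOf_eventually_zero c c'⟩]
  rw [← h1, measure_preimage_add]

lemma measure_eq_sum_inter_cyl (E : Set Om) (hE : MeasurableSet E) (n : ℕ) :
    μc E = ∑ c : Fin n → ZMod 2, μc (E ∩ cyl n c) := by
  have hcover : E = ⋃ c ∈ (Finset.univ : Finset (Fin n → ZMod 2)), E ∩ cyl n c := by
    ext ω
    simp only [Set.mem_iUnion, Finset.mem_univ, Set.mem_inter_iff, exists_prop, true_and]
    exact ⟨fun h => ⟨fun i => ω i, h, mem_cyl_self n ω⟩, fun ⟨c, h, _⟩ => h⟩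
  conv_lhs => rw [hcover]
  rw [measure_biUnion_finset]
  · intro c _ c' _ hcc'
    exact ((cyl_disjoint hcc').mono (Set.inter_subset_right) (Set.inter_subset_right))
  · exact fun c _ => hE.inter (measurableSet_cyl n c)

lemma measure_inter_cyl {E : Set Om} (hE : MeasurableSet E) (hinv : FlipInvariant E)
    (n : ℕ) (c : Fin n → ZMod 2) : μc (E ∩ cyl n c) = μc E * ((2 : ℝ≥0∞) ^ n)⁻¹ := by
  have hsum := measure_eq_sum_inter_cyl E hE n
  have hconst : ∀ c' : Fin n → ZMod 2, μc (E ∩ cyl n c') = μc (E ∩ cyl n c) :=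
    fun c' => measure_inter_cyl_eq hinv c' c
  rw [Finset.sum_congr rfl fun c' _ => hconst c', Finset.sum_const, Finset.card_univ,
    Fintype.card_fun, ZMod.card, Fintype.card_fin, nsmul_eq_mul] at hsum
  have h2 : ((2 ^ n : ℕ) : ℝ≥0∞) = (2 : ℝ≥0∞) ^ n := by push_cast; ring
  rw [h2] at hsum
  have hne : ((2 : ℝ≥0∞) ^ n) ≠ 0 := by positivity
  have hnt : ((2 : ℝ≥0∞) ^ n) ≠ ⊤ := by
    exact ENNReal.pow_ne_top (by norm_num)
  rw [hsum, mul_comm ((2 : ℝ≥0∞) ^ n), mul_assoc, ENNReal.mul_inv_cancel hne hnt, mul_one]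

lemma measure_cyl (n : ℕ) (c : Fin n → ZMod 2) :
    μc (cyl n c) = ((2 : ℝ≥0∞) ^ n)⁻¹ := by
  have := measure_inter_cyl MeasurableSet.univ flipInvariant_univ n c
  simpa [measure_univ] using this

lemma μc_singleton (ω : Om) : μc {ω} = 0 := by
  by_contra h
  obtain ⟨n, hn⟩ := ENNReal.exists_inv_two_pow_lt h
  have hle : μc {ω} ≤ ((2 : ℝ≥0∞) ^ n)⁻¹ := by
    rw [← measure_cyl n fun i => ω i]
    exact measure_mono (by rintro x rfl; exact mem_cyl_self n _)
  rw [← ENNReal.inv_pow] at hn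
  exact absurd (hle.trans_lt hn) (lt_irrefl _)

lemma coin_zero_one {E : Set Om} (hE : MeasurableSet E) (hinv : FlipInvariant E) :
    μc E = 0 ∨ μc E = 1 := by
  have key : μc.restrict E = μc E • μc := by
    refine ext_of_generate_finite Cyl generateFrom_Cyl isPiSystem_Cyl ?_ ?_
    · rintro S ⟨n, c, rfl⟩
      rw [Measure.restrict_apply (measurableSet_cyl n c), Set.inter_comm,
        measure_inter_cyl hE hinv n c, Measure.smul_apply, smul_eq_mul, measure_cyl]
    · rw [Measure.restrict_apply_univ, Measure.smul_apply, smul_eq_mul, measure_univ, mul_one]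
  have hEE : μc E = μc E * μc E := by
    have h1 : μc.restrict E E = μc E := by
      rw [Measure.restrict_apply hE, Set.inter_self]
    rw [key, Measure.smul_apply, smul_eq_mul] at h1
    exact h1.symm
  rcases eq_or_ne (μc E) 0 with h | h
  · exact Or.inl h
  · refine Or.inr ?_
    have hne : μc E ≠ ⊤ := (measure_lt_top μc E).ne
    have h3 : μc E * (μc E)⁻¹ = μc E * μc E * (μc E)⁻¹ := by rw [← hEE]
    rw [ENNReal.mul_inv_cancel h hne, mul_assoc, ENNReal.mul_inv_cancel h hne, mul_one] at h3
    exact h3.symm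



variable {G X : Type*} [Group G] [MetricSpace X] [CompactSpace X]
  [MulAction G X] [ContinuousConstSMul G X]

/-- The group element associated to a finite word (in `PiNat.res` order). -/
def gOf (γ : ℕ → G) : List (ZMod 2) → G
  | [] => 1
  | a :: l => gOf γ l * (if a = 1 then γ l.length else 1)

lemma gOf_congr {γ γ' : ℕ → G} : ∀ {l : List (ZMod 2)},
    (∀ i, i < l.length → γ i = γ' i) → gOf γ l = gOf γ' l
  | [], _ => rfl
  | a :: l, h => by
    simp only [gOf, List.length_cons] at h ⊢
    rw [gOf_congr fun i hi => h i (Nat.lt_succ_of_lt hi), h l.length (Nat.lt_succ_self _)]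

variable (x₀ : X)

lemma step_ex (hx₀ : x₀ ∈ closure (MulAction.orbit G x₀ \ {x₀}))
    (n : ℕ) (γ : ℕ → G) (e : ℝ) (he : 0 < e) :
    ∃ q : G × ℝ, 0 < q.2 ∧ q.2 ≤ e / 2 ∧
      ∀ l : List (ZMod 2), l.length = n →
        dist ((gOf γ l * q.1) • x₀) (gOf γ l • x₀) ≤ e / 2 ∧
        2 * q.2 < dist ((gOf γ l * q.1) • x₀) (gOf γ l • x₀) := by
  classical
  -- a uniform modulus of continuity over the finitely many group elements at level n
  have hcont : ∀ h : G, ∃ δ : ℝ, 0 < δ ∧ ∀ y : X, dist y x₀ < δ →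
      dist (h • y) (h • x₀) ≤ e / 2 := by
    intro h
    have := (continuous_const_smul h : Continuous fun y : X => h • y)
    rw [Metric.continuous_iff] at this
    obtain ⟨δ, hδ, hδ'⟩ := this x₀ (e / 2) (by linarith)
    exact ⟨δ, hδ, fun y hy => (hδ' y hy).le⟩
  choose δf hδf1 hδf2 using hcont
  have hfin : {l : List (ZMod 2) | l.length = n}.Finite := List.finite_length_eq _ n
  set T : Finset G := (hfin.image fun l => gOf γ l).toFinset with hT
  have hTne : T.Nonempty := by
    rw [hT]
    refine ⟨gOf γ (List.replicate n 0), ?_⟩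
    rw [Set.Finite.mem_toFinset]
    exact ⟨List.replicate n 0, by simp, rfl⟩
  have hTmem : ∀ l : List (ZMod 2), l.length = n → gOf γ l ∈ T := by
    intro l hl
    rw [hT, Set.Finite.mem_toFinset]
    exact ⟨l, hl, rfl⟩
  set δ : ℝ := T.inf' hTne δf with hδdef
  have hδpos : 0 < δ := by
    rw [hδdef, Finset.lt_inf'_iff]
    exact fun h _ => hδf1 h
  -- use recurrence to find a group element moving x₀ a small positive distance
  rw [Metric.mem_closure_iff] at hx₀
  obtain ⟨y, hy, hyd⟩ := hx₀ δ hδpos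
  obtain ⟨⟨t, rfl⟩, hy1⟩ := hy
  have hy1' : t • x₀ ≠ x₀ := hy1
  -- distances between the two children at each node
  set m : G → ℝ := fun h => dist (h • (t • x₀)) (h • x₀) with hm
  have hmpos : ∀ h : G, 0 < m h := by
    intro h
    rw [hm, dist_pos]
    intro hcon
    exact hy1' (smul_left_cancel h hcon)
  set e' : ℝ := min (e / 2) (T.inf' hTne m / 3) with he'
  have hinfm : 0 < T.inf' hTne m := by
    rw [Finset.lt_inf'_iff]
    exact fun h _ => hmpos h
  refine ⟨(t, e'), ?_, min_le_left _ _, ?_⟩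
  · rw [he']
    exact lt_min (by linarith) (by linarith)
  · intro l hl
    have hmem := hTmem l hl
    have hdy : dist (t • x₀) x₀ < δf (gOf γ l) := by
      rw [dist_comm] at hyd
      exact lt_of_lt_of_le hyd (Finset.inf'_le _ hmem)
    have hsmul : (gOf γ l * t) • x₀ = gOf γ l • (t • x₀) := mul_smul _ _ _
    constructor
    · rw [hsmul]
      exact hδf2 _ _ hdy
    · rw [hsmul]
      have h1 : T.inf' hTne m ≤ m (gOf γ l) := Finset.inf'_le _ hmem
      have h2 : e' ≤ T.inf' hTne m / 3 := min_le_right _ _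
      have := hmpos (gOf γ l)
      rw [hm] at h1
      calc 2 * e' ≤ 2 * (T.inf' hTne m / 3) := by linarith
        _ < T.inf' hTne m := by linarith
        _ ≤ _ := h1

variable (hx₀ : x₀ ∈ closure (MulAction.orbit G x₀ \ {x₀}))

/-- The recursively chosen data: at stage `n`, the group elements chosen so far
(as a function with junk values beyond `n`) and the radius `ε n`. -/
def seq : ℕ → (ℕ → G) × ℝ
  | 0 => (fun _ => 1, 1)
  | n + 1 =>
    if hp : 0 < (seq n).2 then
      ((Function.update (seq n).1 n
          (Classical.choose (step_ex x₀ hx₀ n (seq n).1 (seq n).2 hp)).1),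
        (Classical.choose (step_ex x₀ hx₀ n (seq n).1 (seq n).2 hp)).2)
    else seq n

lemma seq_pos : ∀ n, 0 < (seq x₀ hx₀ n).2
  | 0 => one_pos
  | n + 1 => by
    have hp := seq_pos n
    simp only [seq, dif_pos hp]
    exact (Classical.choose_spec (step_ex x₀ hx₀ n _ _ hp)).1

/-- The final sequence of group elements. -/
def γs (i : ℕ) : G := (seq x₀ hx₀ (i + 1)).1 i

/-- The final sequence of radii. -/
def eps (n : ℕ) : ℝ := (seq x₀ hx₀ n).2

lemma eps_pos (n : ℕ) : 0 < eps x₀ hx₀ n := seq_pos x₀ hx₀ n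

lemma seq_fst_stable : ∀ n i, i < n → (seq x₀ hx₀ n).1 i = γs x₀ hx₀ i := by
  intro n
  induction n with
  | zero => intro i hi; exact absurd hi (Nat.not_lt_zero i)
  | succ n ih =>
    intro i hi
    rcases Nat.lt_succ_iff_lt_or_eq.1 hi with hi' | rfl
    · have hp := seq_pos x₀ hx₀ n
      have : (seq x₀ hx₀ (n + 1)).1 i = (seq x₀ hx₀ n).1 i := by
        simp only [seq, dif_pos hp]
        exact Function.update_of_ne (Nat.ne_of_lt hi') _ _
      rw [this, ih i hi']
    · rfl

lemma main_inv (n : ℕ) :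
    eps x₀ hx₀ (n + 1) ≤ eps x₀ hx₀ n / 2 ∧
    ∀ l : List (ZMod 2), l.length = n →
      dist ((gOf (γs x₀ hx₀) l * γs x₀ hx₀ n) • x₀) (gOf (γs x₀ hx₀) l • x₀)
        ≤ eps x₀ hx₀ n / 2 ∧
      2 * eps x₀ hx₀ (n + 1) <
        dist ((gOf (γs x₀ hx₀) l * γs x₀ hx₀ n) • x₀) (gOf (γs x₀ hx₀) l • x₀) := by
  have hp := seq_pos x₀ hx₀ n
  have hspec := Classical.choose_spec (step_ex x₀ hx₀ n (seq x₀ hx₀ n).1 (seq x₀ hx₀ n).2 hp)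
  have heq1 : eps x₀ hx₀ (n + 1) =
      (Classical.choose (step_ex x₀ hx₀ n (seq x₀ hx₀ n).1 (seq x₀ hx₀ n).2 hp)).2 := by
    show (seq x₀ hx₀ (n + 1)).2 = _
    simp only [seq, dif_pos hp]
  have heq2 : γs x₀ hx₀ n =
      (Classical.choose (step_ex x₀ hx₀ n (seq x₀ hx₀ n).1 (seq x₀ hx₀ n).2 hp)).1 := by
    show (seq x₀ hx₀ (n + 1)).1 n = _
    simp only [seq, dif_pos hp]
    exact Function.update_self _ _ _
  have hgOf : ∀ l : List (ZMod 2), l.length = n →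
      gOf (seq x₀ hx₀ n).1 l = gOf (γs x₀ hx₀) l := by
    intro l hl
    exact gOf_congr fun i hi => seq_fst_stable x₀ hx₀ n i (hl ▸ hi)
  refine ⟨?_, ?_⟩
  · rw [heq1]
    exact hspec.2.1
  · intro l hl
    have := hspec.2.2 l hl
    rw [hgOf l hl, ← heq1, ← heq2] at this
    exact this

/-- The Cantor scheme of closed balls. -/
def sch : List (ZMod 2) → Set X := fun l =>
  Metric.closedBall (gOf (γs x₀ hx₀) l • x₀) (eps x₀ hx₀ l.length)

lemma sch_nonempty (l : List (ZMod 2)) : (sch x₀ hx₀ l).Nonempty :=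
  ⟨_, Metric.mem_closedBall_self (eps_pos x₀ hx₀ _).le⟩

lemma sch_closed (l : List (ZMod 2)) : IsClosed (sch x₀ hx₀ l) :=
  Metric.isClosed_closedBall

lemma sch_antitone : CantorScheme.Antitone (sch x₀ hx₀) := by
  intro l a
  have hinv := main_inv x₀ hx₀ l.length
  have hpos := eps_pos x₀ hx₀ l.length
  by_cases ha : a = 1
  · subst ha
    have hdist := (hinv.2 l rfl).1
    show Metric.closedBall (gOf (γs x₀ hx₀) ((1 : ZMod 2) :: l) • x₀)
        (eps x₀ hx₀ ((1 : ZMod 2) :: l).length) ⊆ _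
    have : gOf (γs x₀ hx₀) ((1 : ZMod 2) :: l) = gOf (γs x₀ hx₀) l * γs x₀ hx₀ l.length := by
      simp [gOf]
    rw [List.length_cons, this]
    exact Metric.closedBall_subset_closedBall' (by linarith [hinv.1])
  · show Metric.closedBall (gOf (γs x₀ hx₀) (a :: l) • x₀)
        (eps x₀ hx₀ (a :: l).length) ⊆ _
    have : gOf (γs x₀ hx₀) (a :: l) = gOf (γs x₀ hx₀) l := by
      simp [gOf, ha]
    rw [List.length_cons, this]
    exact Metric.closedBall_subset_closedBall (by linarith [hinv.1])

lemma sch_disjoint : CantorScheme.Disjoint (sch x₀ hx₀) := by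
  intro l
  have hinv := main_inv x₀ hx₀ l.length
  have hdisj : Disjoint (sch x₀ hx₀ ((0 : ZMod 2) :: l)) (sch x₀ hx₀ ((1 : ZMod 2) :: l)) := by
    have hdist := (hinv.2 l rfl).2
    show Disjoint (Metric.closedBall (gOf (γs x₀ hx₀) ((0 : ZMod 2) :: l) • x₀) _)
      (Metric.closedBall (gOf (γs x₀ hx₀) ((1 : ZMod 2) :: l) • x₀) _)
    have h0 : gOf (γs x₀ hx₀) ((0 : ZMod 2) :: l) = gOf (γs x₀ hx₀) l := by
      simp [gOf]
    have h1 : gOf (γs x₀ hx₀) ((1 : ZMod 2) :: l) = gOf (γs x₀ hx₀) l * γs x₀ hx₀ l.length := by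
      simp [gOf]
    rw [h0, h1]
    simp only [List.length_cons]
    apply Metric.closedBall_disjoint_closedBall
    rw [dist_comm]
    linarith
  intro a b hab
  have hz : ∀ z : ZMod 2, z = 0 ∨ z = 1 := by decide
  rcases hz a with rfl | rfl <;> rcases hz b with rfl | rfl
  · exact absurd rfl hab
  · exact hdisj
  · exact hdisj.symm
  · exact absurd rfl hab

lemma eps_le (n : ℕ) : eps x₀ hx₀ n ≤ eps x₀ hx₀ 0 * (1 / 2) ^ n := by
  induction n with
  | zero => simp
  | succ n ih =>
    have h1 := (main_inv x₀ hx₀ n).1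
    calc eps x₀ hx₀ (n + 1) ≤ eps x₀ hx₀ n / 2 := h1
      _ ≤ eps x₀ hx₀ 0 * (1 / 2) ^ n / 2 := by linarith
      _ = eps x₀ hx₀ 0 * (1 / 2) ^ (n + 1) := by ring

lemma eps_tendsto : Tendsto (eps x₀ hx₀) atTop (𝓝 0) := by
  apply squeeze_zero (fun n => (eps_pos x₀ hx₀ n).le) (eps_le x₀ hx₀)
  have h := tendsto_pow_atTop_nhds_zero_of_lt_one (by norm_num : (0:ℝ) ≤ 1/2) (by norm_num)
  simpa using h.const_mul (eps x₀ hx₀ 0)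

lemma sch_vanishing : CantorScheme.VanishingDiam (sch x₀ hx₀) := by
  intro x
  have hub : ∀ n, EMetric.diam (sch x₀ hx₀ (PiNat.res x n)) ≤
      ENNReal.ofReal (2 * eps x₀ hx₀ n) := by
    intro n
    apply EMetric.diam_le
    intro y hy z hz
    rw [edist_dist]
    apply ENNReal.ofReal_le_ofReal
    have h1 : dist y (gOf (γs x₀ hx₀) (PiNat.res x n) • x₀) ≤ eps x₀ hx₀ n := by
      have := hy
      simp only [sch, Metric.mem_closedBall, PiNat.res_length] at this
      exact this
    have h2 : dist z (gOf (γs x₀ hx₀) (PiNat.res x n) • x₀) ≤ eps x₀ hx₀ n := by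
      have := hz
      simp only [sch, Metric.mem_closedBall, PiNat.res_length] at this
      exact this
    calc dist y z ≤ dist y _ + dist _ z := dist_triangle y _ z
      _ ≤ eps x₀ hx₀ n + eps x₀ hx₀ n := by rw [dist_comm (gOf (γs x₀ hx₀) (PiNat.res x n) • x₀) z] at *; linarith
      _ = 2 * eps x₀ hx₀ n := by ring
  have h0 : Tendsto (fun n => ENNReal.ofReal (2 * eps x₀ hx₀ n)) atTop (𝓝 0) := by
    have : Tendsto (fun n => 2 * eps x₀ hx₀ n) atTop (𝓝 0) := by
      simpa using (eps_tendsto x₀ hx₀).const_mul 2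
    have := (ENNReal.continuous_ofReal.tendsto 0).comp this
    simpa only [Function.comp_def, ENNReal.ofReal_zero] using this
  exact tendsto_of_tendsto_of_tendsto_of_le_of_le tendsto_const_nhds h0
    (fun n => zero_le) hub

include hx₀ in
lemma exists_phi : ∃ φ : (ℕ → ZMod 2) → X, Continuous φ ∧ Function.Injective φ ∧
    ∀ x y : ℕ → ZMod 2, (∃ m, ∀ k, m ≤ k → x k = y k) → ∃ g : G, φ y = g • φ x := by
  have hanti : CantorScheme.ClosureAntitone (sch x₀ hx₀) :=
    (sch_antitone x₀ hx₀).closureAntitone fun l => sch_closed x₀ hx₀ l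
  have hdom : (CantorScheme.inducedMap (sch x₀ hx₀)).1 = Set.univ :=
    hanti.map_of_vanishingDiam (sch_vanishing x₀ hx₀) fun l => sch_nonempty x₀ hx₀ l
  set φ : (ℕ → ZMod 2) → X :=
    fun x => (CantorScheme.inducedMap (sch x₀ hx₀)).2 ⟨x, by rw [hdom]; trivial⟩ with hφ
  have hmem : ∀ (x : ℕ → ZMod 2) (n : ℕ), φ x ∈ sch x₀ hx₀ (PiNat.res x n) := by
    intro x n
    exact CantorScheme.map_mem ⟨x, by rw [hdom]; trivial⟩ n
  -- the induced map is the limit of the centers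
  have hcen : ∀ x : ℕ → ZMod 2,
      Tendsto (fun n => gOf (γs x₀ hx₀) (PiNat.res x n) • x₀) atTop (𝓝 (φ x)) := by
    intro x
    rw [tendsto_iff_dist_tendsto_zero]
    apply squeeze_zero (fun n => dist_nonneg)
      (g := eps x₀ hx₀) ?_ (eps_tendsto x₀ hx₀)
    intro n
    have := hmem x n
    simp only [sch, Metric.mem_closedBall, PiNat.res_length] at this
    rw [dist_comm]
    exact this
  refine ⟨φ, ?_, ?_, ?_⟩
  · exact (CantorScheme.VanishingDiam.map_continuous (sch_vanishing x₀ hx₀)).comp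
      (Continuous.subtype_mk continuous_id _)
  · intro x y hxy
    have := (sch_disjoint x₀ hx₀).map_injective hxy
    exact congrArg Subtype.val this
  · intro x y ⟨m, hm⟩
    refine ⟨gOf (γs x₀ hx₀) (PiNat.res y m) * (gOf (γs x₀ hx₀) (PiNat.res x m))⁻¹, ?_⟩
    set gd := gOf (γs x₀ hx₀) (PiNat.res y m) * (gOf (γs x₀ hx₀) (PiNat.res x m))⁻¹ with hgd
    have hclaim : ∀ n, m ≤ n →
        gOf (γs x₀ hx₀) (PiNat.res y n) = gd * gOf (γs x₀ hx₀) (PiNat.res x n) := by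
      intro n hn
      induction n, hn using Nat.le_induction with
      | base => rw [hgd]; group
      | succ n hn ih =>
        rw [PiNat.res_succ, PiNat.res_succ]
        show gOf (γs x₀ hx₀) (PiNat.res y n) * _ = gd * (gOf (γs x₀ hx₀) (PiNat.res x n) * _)
        rw [ih, hm n hn, mul_assoc]
        congr 2
        rw [PiNat.res_length, PiNat.res_length]
    have h1 : Tendsto (fun n => gOf (γs x₀ hx₀) (PiNat.res y n) • x₀) atTop
        (𝓝 (gd • φ x)) := by
      have h2 := (hcen x).const_smul gd
      apply h2.congr'
      rw [eventuallyEq_iff_exists_mem]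
      refine ⟨{n | m ≤ n}, mem_atTop m, ?_⟩
      intro n hn
      show gd • gOf (γs x₀ hx₀) (PiNat.res x n) • x₀ = gOf (γs x₀ hx₀) (PiNat.res y n) • x₀
      rw [hclaim n hn]
      simp only [hgd, mul_smul]
    exact tendsto_nhds_unique (hcen y) h1


end

end GlimmEffrosAux

open MeasureTheory Pointwise GlimmEffrosAux

/-- If a group `G` acts by homeomorphisms on a compact metric space `X` and there exists
a recurrent point (a point `x` with a net `g_i • x → x`, `g_i • x ≠ x`, equivalently
`x ∈ closure (Orb_G(x) \ {x})`), then there exists an atomless Borel probability measure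
on `X` giving measure `0` or `1` to every `G`-invariant Borel set. -/
theorem exists_continuous_zero_one_measure_of_recurrent
    {G X : Type*} [Group G] [MetricSpace X] [CompactSpace X]
    [MeasurableSpace X] [BorelSpace X]
    [MulAction G X] [ContinuousConstSMul G X]
    (hrec : ∃ x : X, x ∈ closure (MulAction.orbit G x \ {x})) :
    ∃ μ : Measure X, IsProbabilityMeasure μ ∧ (∀ x : X, μ {x} = 0) ∧
      ∀ A : Set X, MeasurableSet A → (∀ g : G, g • A = A) →
        μ A = 0 ∨ μ A = 1 := by
  obtain ⟨x₀, hx₀⟩ := hrec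
  obtain ⟨φ, hφc, hφi, hφflip⟩ := exists_phi x₀ hx₀
  have hφm : Measurable φ := hφc.measurable
  refine ⟨μc.map φ, Measure.isProbabilityMeasure_map hφm.aemeasurable, ?_, ?_⟩
  · intro x
    rw [Measure.map_apply hφm (measurableSet_singleton x)]
    rcases Set.eq_empty_or_nonempty (φ ⁻¹' {x}) with h | ⟨ω, hω⟩
    · simp [h]
    · have hsub : φ ⁻¹' {x} ⊆ {ω} := by
        intro ω' hω'
        have : φ ω' = φ ω := by
          rw [Set.mem_preimage, Set.mem_singleton_iff] at hω' hω
          rw [hω', hω]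
        exact hφi this
      exact le_antisymm ((measure_mono hsub).trans (μc_singleton ω).le) zero_le
  · intro A hA hAinv
    rw [Measure.map_apply hφm hA]
    apply coin_zero_one (hφm hA)
    intro d ⟨m, hd⟩
    ext ω
    simp only [Set.mem_preimage]
    obtain ⟨g, hg⟩ := hφflip ω (d + ω) ⟨m, fun k hk => by
      show ω k = d k + ω k
      rw [hd k hk, zero_add]⟩
    have hmem : ∀ z : X, z ∈ A ↔ g • z ∈ A := by
      intro z
      conv_rhs => rw [← hAinv g]
      exact (Set.smul_mem_smul_set_iff (a := g) (s := A)).symm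
    rw [hg]
    exact (hmem (φ ω)).symm
end
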